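/- The span of the eight vector fields Z₁,…,Z₈ (as in the equivalence algebra of the 2-Hessian equation) is closed under Lie bracket, i.e. it forms an 8-dimensional Lie algebra of vector fields on ℝ⁴. -/

import Mathlib

/-- Vector fields on ℝ⁴ with coordinates (x, y, z, f). -/
abbrev VF : Type := (Fin 4 → ℝ) → Fin 4 → ℝ

/-- Lie bracket of vector fields: [X,Y]ᵢ = Σⱼ (Xⱼ ∂ⱼYᵢ − Yⱼ ∂ⱼXᵢ). -/
noncomputable def lie (X Y : VF) : VF := fun p i =>
  ∑ j, (X p j * fderiv ℝ (fun q => Y q i) p (Pi.single j 1)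
    - Y p j * fderiv ℝ (fun q => X q i) p (Pi.single j 1))

noncomputable def Z₁ : VF := fun _ => ![1, 0, 0, 0]
noncomputable def Z₂ : VF := fun _ => ![0, 1, 0, 0]
noncomputable def Z₃ : VF := fun _ => ![0, 0, 1, 0]
noncomputable def Z₄ : VF := fun p => ![p 2, 0, -p 0, 0]
noncomputable def Z₅ : VF := fun p => ![p 1, -p 0, 0, 0]
noncomputable def Z₆ : VF := fun p => ![0, p 2, -p 1, 0]
noncomputable def Z₇ : VF := fun p => ![0, 0, 0, 2 * p 3]
noncomputable def Z₈ : VF := fun p => ![p 0, p 1, p 2, -4 * p 3]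


/-!
Every element `∑ cᵢ Zᵢ` of the span is the affine vector field `p ↦ A p + b`, where `A` is an
infinitesimal rotation plus a dilation of `(x, y, z)` together with a scaling of `f`, and `b` is a
translation in `(x, y, z)`. The bracket of the affine fields `A p + b` and `B p + d` is the affine
field with linear part `BA − AB` and translation `Bb − Ad`; for matrices and vectors of this
shape both are again of this shape, which gives closure. An affine field determines `A` and `b`,
and these determine the coefficients `cᵢ`, so the `Zᵢ` are linearly independent.
-/

open Matrix

noncomputable def affineField {n : ℕ} (A : Matrix (Fin n) (Fin n) ℝ) (b : Fin n → ℝ) :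
    (Fin n → ℝ) → Fin n → ℝ :=
  fun p => A *ᵥ p + b

lemma fderiv_affineField_apply {n : ℕ} (A : Matrix (Fin n) (Fin n) ℝ) (b : Fin n → ℝ)
    (i j : Fin n) (p : Fin n → ℝ) :
    fderiv ℝ (fun q => affineField A b q i) p (Pi.single j 1) = A i j := by
  have h : HasFDerivAt (fun q => ∑ k, A i k * q k + b i)
      (∑ k, A i k • (ContinuousLinearMap.proj k : (Fin n → ℝ) →L[ℝ] ℝ)) p :=
    (HasFDerivAt.fun_sum fun k _ =>
      (hasFDerivAt_apply k p).const_mul (A i k)).add_const (b i)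
  change fderiv ℝ (fun q => ∑ k, A i k * q k + b i) p (Pi.single j 1) = A i j
  simp [h.fderiv, Pi.single_apply]

lemma lie_affineField (A B : Matrix (Fin 4) (Fin 4) ℝ) (b d : Fin 4 → ℝ) :
    lie (affineField A b) (affineField B d) =
      affineField (B * A - A * B) (B *ᵥ b - A *ᵥ d) := by
  have h : affineField (B * A - A * B) (B *ᵥ b - A *ᵥ d) =
      fun p => B *ᵥ affineField A b p - A *ᵥ affineField B d p := by
    funext p
    simp only [affineField, sub_mulVec, mulVec_add, mulVec_mulVec]
    abel
  rw [h]
  funext p i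
  simp only [lie, fderiv_affineField_apply, Pi.sub_apply, mulVec, dotProduct,
    ← Finset.sum_sub_distrib, mul_comm]

lemma eq_and_eq_of_affineField_eq {n : ℕ} {A B : Matrix (Fin n) (Fin n) ℝ} {b d : Fin n → ℝ}
    (h : affineField A b = affineField B d) : A = B ∧ b = d := by
  have hbd : b = d := by simpa [affineField] using congrFun h 0
  refine ⟨?_, hbd⟩
  ext i j
  simpa [affineField, hbd] using congrFun (congrFun h (Pi.single j 1)) i

noncomputable def Zbasis : Fin 8 → VF := ![Z₁, Z₂, Z₃, Z₄, Z₅, Z₆, Z₇, Z₈]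

lemma range_Zbasis : Set.range Zbasis = ({Z₁, Z₂, Z₃, Z₄, Z₅, Z₆, Z₇, Z₈} : Set VF) := by
  simp only [Zbasis, range_cons, range_empty, Set.union_empty, Set.singleton_union]

def linearPart (c : Fin 8 → ℝ) : Matrix (Fin 4) (Fin 4) ℝ :=
  !![c 7, c 4, c 3, 0; -c 4, c 7, c 5, 0; -c 3, -c 5, c 7, 0; 0, 0, 0, 2 * c 6 - 4 * c 7]

def translationPart (c : Fin 8 → ℝ) : Fin 4 → ℝ := ![c 0, c 1, c 2, 0]

lemma sum_smul_Zbasis (c : Fin 8 → ℝ) :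
    ∑ i, c i • Zbasis i = affineField (linearPart c) (translationPart c) := by
  funext p j
  fin_cases j <;>
    simp [Fin.sum_univ_eight, Zbasis, Z₁, Z₂, Z₃, Z₄, Z₅, Z₆, Z₇, Z₈, affineField, linearPart,
      translationPart, dotProduct, Fin.sum_univ_four] <;> ring

lemma mem_span_Zbasis_iff {X : VF} :
    X ∈ Submodule.span ℝ (Set.range Zbasis) ↔
      ∃ c, X = affineField (linearPart c) (translationPart c) := by
  rw [Submodule.mem_span_range_iff_exists_fun]
  simp only [sum_smul_Zbasis, eq_comm]

def bracketCoeff (c d : Fin 8 → ℝ) : Fin 8 → ℝ :=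
  ![d 7 * c 0 + d 4 * c 1 + d 3 * c 2 - (c 7 * d 0 + c 4 * d 1 + c 3 * d 2),
    -d 4 * c 0 + d 7 * c 1 + d 5 * c 2 - (-c 4 * d 0 + c 7 * d 1 + c 5 * d 2),
    -d 3 * c 0 - d 5 * c 1 + d 7 * c 2 - (-c 3 * d 0 - c 5 * d 1 + c 7 * d 2),
    c 5 * d 4 - c 4 * d 5,
    c 3 * d 5 - c 5 * d 3,
    c 4 * d 3 - c 3 * d 4,
    0, 0]

lemma linearPart_bracketCoeff (c d : Fin 8 → ℝ) :
    linearPart d * linearPart c - linearPart c * linearPart d = linearPart (bracketCoeff c d) := by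
  ext i j
  fin_cases i <;> fin_cases j <;> simp [linearPart, bracketCoeff] <;> ring

lemma translationPart_bracketCoeff (c d : Fin 8 → ℝ) :
    linearPart d *ᵥ translationPart c - linearPart c *ᵥ translationPart d =
      translationPart (bracketCoeff c d) := by
  ext i
  fin_cases i <;> simp [linearPart, translationPart, bracketCoeff] <;> ring

lemma eq_zero_of_linearPart_translationPart {c : Fin 8 → ℝ} (hA : linearPart c = 0)
    (hb : translationPart c = 0) : c = 0 := by
  have hA' (i j : Fin 4) : linearPart c i j = 0 := by rw [hA]; rfl
  have hb' (i : Fin 4) : translationPart c i = 0 := by rw [hb]; rfl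
  have h6 : c 6 = 0 := by
    have h33 : 2 * c 6 - 4 * c 7 = 0 := hA' 3 3
    have h00 : c 7 = 0 := hA' 0 0
    linarith
  funext i
  fin_cases i
  exacts [hb' 0, hb' 1, hb' 2, hA' 0 2, hA' 0 1, hA' 1 2, h6, hA' 0 0]

lemma linearIndependent_Zbasis : LinearIndependent ℝ Zbasis := by
  refine Fintype.linearIndependent_iff.2 fun c hc => congrFun ?_
  rw [sum_smul_Zbasis, show (0 : VF) = affineField 0 0 by funext p; simp [affineField]] at hc
  obtain ⟨hA, hb⟩ := eq_and_eq_of_affineField_eq hc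
  exact eq_zero_of_linearPart_translationPart hA hb

theorem stmt10 :
    (∀ X Y : VF, X ∈ Submodule.span ℝ ({Z₁, Z₂, Z₃, Z₄, Z₅, Z₆, Z₇, Z₈} : Set VF) →
      Y ∈ Submodule.span ℝ ({Z₁, Z₂, Z₃, Z₄, Z₅, Z₆, Z₇, Z₈} : Set VF) →
      lie X Y ∈ Submodule.span ℝ ({Z₁, Z₂, Z₃, Z₄, Z₅, Z₆, Z₇, Z₈} : Set VF)) ∧
    Module.finrank ℝ (Submodule.span ℝ ({Z₁, Z₂, Z₃, Z₄, Z₅, Z₆, Z₇, Z₈} : Set VF)) = 8 := by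
  rw [← range_Zbasis]
  simp only [mem_span_Zbasis_iff]
  refine ⟨?_, by rw [finrank_span_eq_card linearIndependent_Zbasis, Fintype.card_fin]⟩
  rintro _ _ ⟨c, rfl⟩ ⟨d, rfl⟩
  exact ⟨bracketCoeff c d, by
    rw [lie_affineField, linearPart_bracketCoeff, translationPart_bracketCoeff]⟩
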